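/- Fix a permutation v ∈ S_∞ and k ≥ 1. The set of saturated chains γ in the k-Bruhat order starting at v with cover labels (a_1,b_1),...,(a_q,b_q) satisfying b_1 ≥ b_2 ≥ ... ≥ b_q is finite. In particular, in such a chain no label (a_i,b_i) can repeat: (a_i,b_i) ≠ (a_j,b_j) for i ≠ j. -/

import Mathlib

noncomputable section

/-- The length (number of inversions) of a finitely supported permutation of ℕ. -/
def len (w : Equiv.Perm ℕ) : ℕ := Set.ncard {p : ℕ × ℕ | p.1 < p.2 ∧ w p.2 < w p.1}

/-- `IsKChain k v L` : the list of transposition labels `L = [(a_1,b_1),...,(a_q,b_q)]`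
describes a saturated chain in the `k`-Bruhat order starting at `v`: each step is a Bruhat
cover `u ⋖ u·(a_i,b_i)` with `a_i ≤ k < b_i` (positions being positive integers). -/
def IsKChain (k : ℕ) : Equiv.Perm ℕ → List (ℕ × ℕ) → Prop
  | _, [] => True
  | v, p :: t => 0 < p.1 ∧ p.1 ≤ k ∧ k < p.2 ∧
      len (v * Equiv.swap p.1 p.2) = len v + 1 ∧ IsKChain k (v * Equiv.swap p.1 p.2) t

/-- The endpoint of the chain starting at `v` with transposition labels `L`. -/
def chainEnd : Equiv.Perm ℕ → List (ℕ × ℕ) → Equiv.Perm ℕ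
  | v, [] => v
  | v, p :: t => chainEnd (v * Equiv.swap p.1 p.2) t

/-- The order `≺` on labels of covers: `(a,b) ≺ (c,d)` iff `b > d`, or `b = d` and `a < c`. -/
def prec (p q : ℕ × ℕ) : Prop := q.2 < p.2 ∨ (q.2 = p.2 ∧ p.1 < q.1)

/-- Condition (P1): `b_1 ≥ b_2 ≥ ... ≥ b_q` (0-indexed list access). -/
def CondP1 (L : List (ℕ × ℕ)) : Prop :=
  ∀ t, t + 1 < L.length → (L.getD (t+1) (0,0)).2 ≤ (L.getD t (0,0)).2

/-- Condition (P0): for `2 ≤ i ≤ q-1` (1-indexed; here `t = i-1` is the 0-indexed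
position, so `1 ≤ t` and `t + 2 ≤ q`), if `a_j = a_i` for some `j < i`, then
`(a_i,b_i) ≺ (a_{i+1},b_{i+1})`. -/
def CondP0 (L : List (ℕ × ℕ)) : Prop :=
  ∀ t, 1 ≤ t → t + 2 ≤ L.length →
    (∃ s, s < t ∧ (L.getD s (0,0)).1 = (L.getD t (0,0)).1) →
    prec (L.getD t (0,0)) (L.getD (t+1) (0,0))

/-!
Right multiplication by a transposition `(a b)` with `a < b` and `u a < u b` maps the inversions
of `u` injectively into those of `u * (a b)`, missing `(a, b)` and every `(a, c)` with `a < c < b`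
and `u a < u c < u b`. Hence a cover `u ⋖ u * (a b)` forces `u a < u b`, and if `u` fixes every
point above `n ≥ a`, it forces `b ≤ n + 1` (else `c = b - 1` is a second missed inversion).
Under (P1) every `b_i` is at most `b_1 ≤ n + 1`, so the whole chain lives in `S_{n+2}`, which
bounds both its labels and its length. A label `(a, b)` cannot recur: after the step `(a, b)`
the value at `a` exceeds the value at `b`, the intermediate steps `(a', b)`, `a' ≠ a`, only lower
the value at `b`, and a second step `(a, b)` would need the opposite inequality.
-/

open Equiv

def inversions (w : Perm ℕ) : Set (ℕ × ℕ) := {p | p.1 < p.2 ∧ w p.2 < w p.1}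

theorem len_eq_ncard_inversions (w : Perm ℕ) : len w = (inversions w).ncard := rfl

def FixesAbove (w : Perm ℕ) (n : ℕ) : Prop := ∀ i, n < i → w i = i

section FixesAbove

variable {w : Perm ℕ} {n : ℕ}

theorem FixesAbove.apply_le (h : FixesAbove w n) {i : ℕ} (hi : i ≤ n) : w i ≤ n := by
  by_contra! hc
  have := w.injective (h _ hc)
  omega

theorem FixesAbove.inversions_subset (h : FixesAbove w n) :
    inversions w ⊆ (Finset.Iic n ×ˢ Finset.Iic n : Finset (ℕ × ℕ)) := by
  rintro ⟨i, j⟩ ⟨hij, hw⟩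
  dsimp only at hij hw
  have hj : j ≤ n := by
    by_contra! hj
    rw [h j hj] at hw
    rcases le_or_gt i n with hi | hi
    · have := h.apply_le hi
      omega
    · rw [h i hi] at hw
      omega
  simp only [Finset.coe_product, Finset.coe_Iic, Set.mem_prod, Set.mem_Iic]
  omega

theorem FixesAbove.len_le (h : FixesAbove w n) : len w ≤ (n + 1) * (n + 1) := by
  calc len w ≤ ((Finset.Iic n ×ˢ Finset.Iic n : Finset (ℕ × ℕ)) : Set (ℕ × ℕ)).ncard :=
        Set.ncard_le_ncard h.inversions_subset (Finset.finite_toSet _)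
    _ = (n + 1) * (n + 1) := by
        rw [Set.ncard_coe_finset, Finset.card_product, Nat.card_Iic]

theorem FixesAbove.mono {m : ℕ} (h : FixesAbove w n) (hnm : n ≤ m) : FixesAbove w m :=
  fun i hi => h i (by omega)

theorem FixesAbove.mul_swap (h : FixesAbove w n) {a b : ℕ} (ha : a ≤ n) (hb : b ≤ n) :
    FixesAbove (w * swap a b) n := fun i hi => by
  rw [Perm.mul_apply, swap_apply_of_ne_of_ne (by omega) (by omega), h i hi]

theorem FixesAbove.finite_support (h : FixesAbove w n) : {i | w i ≠ i}.Finite :=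
  (Set.finite_Iic n).subset fun i hi => not_lt.1 fun hni => hi (h i hni)

theorem exists_fixesAbove (hw : {i | w i ≠ i}.Finite) (k : ℕ) : ∃ n, k ≤ n ∧ FixesAbove w n := by
  obtain ⟨m, hm⟩ := hw.bddAbove
  exact ⟨max k m, le_max_left _ _, fun i hi => by_contra fun hwi => by
    have := hm hwi
    omega⟩

theorem finite_inversions (hw : {i | w i ≠ i}.Finite) : (inversions w).Finite := by
  obtain ⟨n, -, h⟩ := exists_fixesAbove hw 0
  exact (Finset.finite_toSet _).subset h.inversions_subset

theorem finite_support_mul_swap (hw : {i | w i ≠ i}.Finite) (a b : ℕ) :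
    {i | (w * swap a b) i ≠ i}.Finite := by
  refine (hw.union (Set.toFinite {a, b})).subset fun i hi => ?_
  by_cases hab : i = a ∨ i = b
  · exact Or.inr hab
  · push Not at hab
    rw [Set.mem_ofPred_eq, Perm.mul_apply, swap_apply_of_ne_of_ne hab.1 hab.2] at hi
    exact Or.inl hi

end FixesAbove

section SwapOutside

variable {a b : ℕ}

theorem swap_apply_mem_Ioo_iff {x : ℕ} : swap a b x ∈ Set.Ioo a b ↔ x ∈ Set.Ioo a b := by
  rw [swap_apply_def]
  split_ifs <;> simp only [Set.mem_Ioo] <;> omega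

variable (a b) in
/-- A pair with an entry strictly between `a` and `b` keeps its inversion status when the values
at `a` and `b` are swapped upwards; any other pair is moved along by `(a b)`. -/
def swapOutside (p : ℕ × ℕ) : ℕ × ℕ :=
  if p.1 ∈ Set.Ioo a b ∨ p.2 ∈ Set.Ioo a b then p else Prod.map (swap a b) (swap a b) p

theorem swapOutside_left_right : swapOutside a b (a, b) = (b, a) := by
  simp [swapOutside]

theorem swapOutside_of_snd_mem {p : ℕ × ℕ} (hp : p.2 ∈ Set.Ioo a b) : swapOutside a b p = p :=
  if_pos (Or.inr hp)

theorem swapOutside_involutive : Function.Involutive (swapOutside a b) := by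
  intro p
  by_cases hp : p.1 ∈ Set.Ioo a b ∨ p.2 ∈ Set.Ioo a b
  · simp only [swapOutside, if_pos hp]
  · simp only [swapOutside, if_neg hp, Prod.map_fst, Prod.map_snd, swap_apply_mem_Ioo_iff]
    ext <;> simp

theorem mapsTo_swapOutside_inversions {u : Perm ℕ} (hab : a < b) (hu : u a < u b) :
    Set.MapsTo (swapOutside a b) (inversions u) (inversions (u * swap a b)) := by
  rintro ⟨i, j⟩ ⟨hij, hji⟩
  dsimp only at hij hji
  simp only [swapOutside, Set.mem_Ioo]
  split_ifs with hmid
  · refine ⟨hij, ?_⟩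
    simp only [Perm.mul_apply, swap_apply_def]
    split_ifs <;> subst_vars <;> omega
  · refine ⟨?_, by simpa [Perm.mul_apply] using hji⟩
    have hne : ¬(i = a ∧ j = b) := by
      rintro ⟨rfl, rfl⟩
      omega
    simp only [Prod.map_fst, Prod.map_snd, swap_apply_def]
    split_ifs <;> omega

end SwapOutside

section Cover

variable {u : Perm ℕ} {a b : ℕ}

theorem len_add_ncard_le (hab : a < b) (hu : u a < u b) (hfin : {i | u i ≠ i}.Finite)
    {T : Set (ℕ × ℕ)} (hT : T ⊆ inversions (u * swap a b))
    (hTu : ∀ p ∈ T, swapOutside a b p ∉ inversions u) :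
    len u + T.ncard ≤ len (u * swap a b) := by
  have hfin' := finite_inversions (finite_support_mul_swap hfin a b)
  have hdisj : Disjoint (swapOutside a b '' inversions u) T := by
    refine Set.disjoint_left.2 ?_
    rintro _ ⟨q, hq, rfl⟩ hqT
    exact hTu _ hqT (by rwa [swapOutside_involutive])
  calc len u + T.ncard = (swapOutside a b '' inversions u ∪ T).ncard := by
        rw [Set.ncard_union_eq hdisj ((finite_inversions hfin).image _) (hfin'.subset hT),
          Set.ncard_image_of_injective _ swapOutside_involutive.injective, len_eq_ncard_inversions]
    _ ≤ len (u * swap a b) :=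
        Set.ncard_le_ncard (Set.union_subset (mapsTo_swapOutside_inversions hab hu).image_subset hT)
          hfin'

theorem len_lt_len_mul_swap (hab : a < b) (hu : u a < u b) (hfin : {i | u i ≠ i}.Finite) :
    len u < len (u * swap a b) := by
  have key := len_add_ncard_le (T := {(a, b)}) hab hu hfin ?_ ?_
  · simpa using key
  · simpa [inversions, hab] using hu
  · simp only [Set.mem_singleton_iff, forall_eq, swapOutside_left_right]
    exact fun h => hab.not_gt h.1

theorem len_add_two_le_len_mul_swap {c : ℕ} (hac : a < c) (hcb : c < b) (hac' : u a < u c)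
    (hcb' : u c < u b) (hfin : {i | u i ≠ i}.Finite) :
    len u + 2 ≤ len (u * swap a b) := by
  have key := len_add_ncard_le (T := {(a, b), (a, c)}) (hac.trans hcb) (hac'.trans hcb') hfin ?_ ?_
  · rwa [Set.ncard_pair (by simpa using hcb.ne')] at key
  · simp only [Set.insert_subset_iff, Set.singleton_subset_iff, inversions, Set.mem_ofPred_eq,
      Perm.mul_apply, swap_apply_left, swap_apply_right,
      swap_apply_of_ne_of_ne hac.ne' (hcb.ne : c ≠ b)]
    omega
  · simp only [Set.mem_insert_iff, Set.mem_singleton_iff, forall_eq_or_imp, forall_eq,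
      swapOutside_left_right, swapOutside_of_snd_mem (p := (a, c)) ⟨hac, hcb⟩]
    exact ⟨fun h => (hac.trans hcb).not_gt h.1, fun h => hac'.not_gt h.2⟩

theorem apply_lt_apply_of_len_mul_swap (hab : a < b) (hfin : {i | u i ≠ i}.Finite)
    (hcov : len (u * swap a b) = len u + 1) : u a < u b := by
  by_contra! hba
  have hba : (u * swap a b) a < (u * swap a b) b := by
    simp only [Perm.mul_apply, swap_apply_left, swap_apply_right]
    exact lt_of_le_of_ne hba (u.injective.ne hab.ne')
  have := len_lt_len_mul_swap hab hba (finite_support_mul_swap hfin a b)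
  rw [mul_assoc, swap_mul_self, mul_one] at this
  omega

theorem FixesAbove.le_add_one_of_len_mul_swap {n : ℕ} (hu : FixesAbove u n) (ha : a ≤ n)
    (hcov : len (u * swap a b) = len u + 1) : b ≤ n + 1 := by
  by_contra! hb
  have := len_add_two_le_len_mul_swap (a := a) (b := b) (c := b - 1) (by omega) (by omega)
    (by rw [hu (b - 1) (by omega)]; have := hu.apply_le ha; omega)
    (by rw [hu (b - 1) (by omega), hu b (by omega)]; omega) hu.finite_support
  omega

end Cover

theorem List.finite_of_length_le_of_forall_mem {α : Type*} {T : Set α} (hT : T.Finite) (N : ℕ) :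
    {L : List α | L.length ≤ N ∧ ∀ x ∈ L, x ∈ T}.Finite := by
  have := hT.to_subtype
  refine ((List.finite_length_le T N).image (List.map Subtype.val)).subset ?_
  rintro L ⟨hlen, hmem⟩
  exact ⟨L.pmap Subtype.mk hmem, by simpa using hlen, by simp [List.map_pmap]⟩

theorem condP1_iff_pairwise {L : List (ℕ × ℕ)} :
    CondP1 L ↔ L.Pairwise (fun p q => q.2 ≤ p.2) := by
  have : Trans (fun p q : ℕ × ℕ => q.2 ≤ p.2) (fun p q : ℕ × ℕ => q.2 ≤ p.2)
      (fun p q : ℕ × ℕ => q.2 ≤ p.2) :=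
    ⟨fun h₁ h₂ => h₂.trans h₁⟩
  rw [← List.isChain_iff_pairwise, List.isChain_iff_getElem, CondP1]
  refine forall_congr' fun t => forall_congr' fun ht => ?_
  rw [List.getD_eq_getElem _ _ ht, List.getD_eq_getElem _ _ (by omega)]

section Chain

variable {k : ℕ} {v : Perm ℕ} {L : List (ℕ × ℕ)}

theorem IsKChain.len_chainEnd (hC : IsKChain k v L) : len (chainEnd v L) = len v + L.length := by
  induction L generalizing v with
  | nil => rfl
  | cons p t ih =>
    obtain ⟨-, -, -, hcov, hC⟩ := hC
    rw [chainEnd, ih hC, hcov, List.length_cons]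
    omega

theorem FixesAbove.chainEnd {m : ℕ} (hv : FixesAbove v m) (hL : ∀ p ∈ L, p.1 ≤ m ∧ p.2 ≤ m) :
    FixesAbove (chainEnd v L) m := by
  induction L generalizing v with
  | nil => exact hv
  | cons p t ih =>
    obtain ⟨h₁, h₂⟩ := hL p List.mem_cons_self
    exact ih (hv.mul_swap h₁ h₂) fun q hq => hL q (List.mem_cons_of_mem _ hq)

theorem IsKChain.fst_le (hC : IsKChain k v L) : ∀ p ∈ L, p.1 ≤ k := by
  induction L generalizing v with
  | nil => simp
  | cons p t ih =>
    obtain ⟨-, hk, -, -, hC⟩ := hC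
    exact List.forall_mem_cons.2 ⟨hk, ih hC⟩

theorem IsKChain.snd_le {n : ℕ} (hC : IsKChain k v L) (hP : L.Pairwise (fun p q => q.2 ≤ p.2))
    (hv : FixesAbove v n) (hkn : k ≤ n) : ∀ p ∈ L, p.2 ≤ n + 1 := by
  cases L with
  | nil => simp
  | cons p t =>
    obtain ⟨-, hk, -, hcov, -⟩ := hC
    have hp : p.2 ≤ n + 1 := hv.le_add_one_of_len_mul_swap (hk.trans hkn) hcov
    exact List.forall_mem_cons.2 ⟨hp, fun q hq => (List.rel_of_pairwise_cons hP hq).trans hp⟩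

theorem IsKChain.length_le {n : ℕ} (hC : IsKChain k v L) (hP : L.Pairwise (fun p q => q.2 ≤ p.2))
    (hv : FixesAbove v n) (hkn : k ≤ n) : L.length ≤ (n + 2) * (n + 2) := by
  have hend : FixesAbove (chainEnd v L) (n + 1) :=
    (hv.mono n.le_succ).chainEnd fun p hp =>
      ⟨(hC.fst_le p hp).trans (by omega), hC.snd_le hP hv hkn p hp⟩
  have hlen := hend.len_le
  rw [hC.len_chainEnd] at hlen
  exact (Nat.le_add_left _ _).trans hlen

theorem IsKChain.pair_not_mem {a b : ℕ} (hv : {i | v i ≠ i}.Finite) (hba : v b < v a)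
    (hC : IsKChain k v L) (hb : ∀ q ∈ L, q.2 ≤ b) (hP : L.Pairwise (fun p q => q.2 ≤ p.2)) :
    (a, b) ∉ L := by
  induction L generalizing v with
  | nil => simp
  | cons q t ih =>
    obtain ⟨-, hqk, hkq, hcov, hC⟩ := hC
    have hq : v q.1 < v q.2 := apply_lt_apply_of_len_mul_swap (by omega) hv hcov
    rw [List.mem_cons]
    rintro (rfl | hmem)
    · exact hba.not_gt hq
    have hqb : q.2 = b := le_antisymm (hb q List.mem_cons_self) (List.rel_of_pairwise_cons hP hmem)
    have hqa : q.1 ≠ a := fun hqa => hba.not_gt (hqa ▸ hqb ▸ hq)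
    have hab : a ≠ b := fun hab => hba.ne (by rw [hab])
    refine ih (finite_support_mul_swap hv _ _) ?_ hC (fun r hr => hb r (List.mem_cons_of_mem _ hr))
      hP.of_cons hmem
    rw [Perm.mul_apply, Perm.mul_apply, ← hqb, swap_apply_right,
      swap_apply_of_ne_of_ne hqa.symm (hqb ▸ hab)]
    exact hq.trans (hqb ▸ hba)

theorem IsKChain.nodup (hv : {i | v i ≠ i}.Finite) (hC : IsKChain k v L)
    (hP : L.Pairwise (fun p q => q.2 ≤ p.2)) : L.Nodup := by
  induction L generalizing v with
  | nil => exact List.nodup_nil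
  | cons p t ih =>
    obtain ⟨-, hpk, hkp, hcov, hC⟩ := hC
    have hp : v p.1 < v p.2 := apply_lt_apply_of_len_mul_swap (by omega) hv hcov
    have hv' := finite_support_mul_swap hv p.1 p.2
    refine List.nodup_cons.2 ⟨hC.pair_not_mem hv' ?_ (fun q hq => List.rel_of_pairwise_cons hP hq)
      hP.of_cons, ih hv' hC hP.of_cons⟩
    simpa only [Perm.mul_apply, swap_apply_left, swap_apply_right] using hp

end Chain

theorem finitely_many_P1_chains_general (k : ℕ) (v : Equiv.Perm ℕ)
    (hv : {i | v i ≠ i}.Finite) :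
    {L : List (ℕ × ℕ) | IsKChain k v L ∧ CondP1 L}.Finite ∧
    ∀ L : List (ℕ × ℕ), IsKChain k v L → CondP1 L →
      ∀ i j, i < j → j < L.length → L.getD i (0,0) ≠ L.getD j (0,0) := by
  refine ⟨?_, fun L hC hP => ?_⟩
  · obtain ⟨n, hkn, hv⟩ := exists_fixesAbove hv k
    refine (List.finite_of_length_le_of_forall_mem
      ((Set.finite_Iic k).prod (Set.finite_Iic (n + 1))) ((n + 2) * (n + 2))).subset ?_
    rintro L ⟨hC, hP⟩
    rw [condP1_iff_pairwise] at hP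
    exact ⟨hC.length_le hP hv hkn, fun p hp => ⟨hC.fst_le p hp, hC.snd_le hP hv hkn p hp⟩⟩
  · have hnodup := hC.nodup hv (condP1_iff_pairwise.1 hP)
    intro i j hij hj
    rw [List.getD_eq_getElem _ _ (hij.trans hj), List.getD_eq_getElem _ _ hj]
    exact fun h => hij.ne (hnodup.getElem_inj_iff.1 h)

/-- For a fixed `v ∈ S_∞` and `k ≥ 1`, the set of saturated chains in the `k`-Bruhat
order starting at `v` whose labels satisfy `b_1 ≥ b_2 ≥ ... ≥ b_q` (condition (P1)) is
finite; moreover, in such a chain no label can repeat. -/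
theorem finitely_many_P1_chains (k : ℕ) (hk : 1 ≤ k) (v : Equiv.Perm ℕ)
    (hv : {i | v i ≠ i}.Finite) (hv0 : v 0 = 0) :
    {L : List (ℕ × ℕ) | IsKChain k v L ∧ CondP1 L}.Finite ∧
    ∀ L : List (ℕ × ℕ), IsKChain k v L → CondP1 L →
      ∀ i j, i < j → j < L.length → L.getD i (0,0) ≠ L.getD j (0,0) :=
  finitely_many_P1_chains_general k v hv

end
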